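/- arXiv:2504.03568 — 2 statements merged into one kernel-verified Lean document; each statement's English description precedes it below -/
import Mathlib

section
/- Let Δ = (C, δ) be a building of type (W, S), let R and T be residues, and let Σ be an apartment with Σ ∩ R ≠ ∅ ≠ Σ ∩ T. Then Σ ∩ proj_R(T) = proj_{Σ∩R}(Σ ∩ T). -/
noncomputable section
open Classical

namespace BldgPaper

variable {B W : Type*} [Group W] {M : CoxeterMatrix B}

/-- `(W,S)` is 2-complete: `2 < m_{st} < ∞` for all distinct `s,t` (entry `0` codes `∞`). -/
def TwoComplete (M : CoxeterMatrix B) : Prop := ∀ i j : B, i ≠ j → 2 < M i j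

/-- `(W,S)` is `Ã₂`-free: no three distinct generators have all pairwise orders equal to `3`. -/
def A2TildeFree (M : CoxeterMatrix B) : Prop :=
  ∀ i j k : B, i ≠ j → j ≠ k → i ≠ k → ¬ (M i j = 3 ∧ M j k = 3 ∧ M i k = 3)

variable (cs : CoxeterSystem M W) {C : Type*} (δ : C → C → W)

/-- The W-metric building axioms for a distance function `δ` on a set of chambers. -/
structure IsBuilding : Prop where
  nonempty : Nonempty C
  eq_one_iff : ∀ x y, δ x y = 1 ↔ x = y
  step : ∀ x y z (i : B), δ y z = cs.simple i → δ x z = δ x y ∨ δ x z = δ x y * cs.simple i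
  step_of_length : ∀ x y z (i : B), δ y z = cs.simple i →
      cs.length (δ x y * cs.simple i) = cs.length (δ x y) + 1 → δ x z = δ x y * cs.simple i
  exists_step : ∀ x y (i : B), ∃ z, δ y z = cs.simple i ∧ δ x z = δ x y * cs.simple i

/-- The standard parabolic subgroup `⟨J⟩`. -/
def parab (J : Set B) : Subgroup W := Subgroup.closure (cs.simple '' J)

/-- The `J`-residue of the chamber `x`. -/
def residue (J : Set B) (x : C) : Set C := {y | δ x y ∈ parab cs J}

def IsResidue (R : Set C) : Prop := ∃ (J : Set B) (x : C), R = residue cs δ J x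

def IsPanel (R : Set C) : Prop := ∃ (i : B) (x : C), R = residue cs δ {i} x

/-- A spherical residue of rank 2. -/
def IsSphRank2 (R : Set C) : Prop :=
  ∃ (i j : B) (x : C), i ≠ j ∧ (parab cs {i, j} : Set W).Finite ∧ R = residue cs δ {i, j} x

/-- `g` is the gate (projection) of `c` onto the set `R`. -/
def IsGate (R : Set C) (c g : C) : Prop :=
  g ∈ R ∧ ∀ y ∈ R, cs.length (δ c y) = cs.length (δ c g) + cs.length (δ g y)

/-- The projection `proj_R c` of a chamber onto a residue (the gate). -/
noncomputable def proj (R : Set C) (c : C) : C :=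
  if h : ∃ g, IsGate cs δ R c g then h.choose else c

/-- `proj_R T = { proj_R t | t ∈ T }`. -/
def projSet (R T : Set C) : Set C := proj cs δ R '' T

/-- Two residues are parallel if they project onto each other. -/
def Parallel (R T : Set C) : Prop :=
  projSet cs δ R T = R ∧ projSet cs δ T R = T

/-- An apartment: a nonempty, convex and thin set of chambers. -/
def IsApartment (A : Set C) : Prop :=
  A.Nonempty ∧
  (∀ P : Set C, IsPanel cs δ P → (P ∩ A).Nonempty → ∀ c ∈ A, proj cs δ P c ∈ A) ∧
  (∀ P : Set C, IsPanel cs δ P → (P ∩ A).Nonempty → (P ∩ A).ncard = 2)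

/-- A root of the apartment `A`: a subset isometric to a half-space `α_i` of `W`. -/
def IsRootOf (A α : Set C) : Prop :=
  α ⊆ A ∧ ∃ (i : B) (f : C → W),
    Set.BijOn f α {w : W | cs.length w < cs.length (cs.simple i * w)} ∧
    ∀ x ∈ α, ∀ y ∈ α, δ x y = (f x)⁻¹ * f y

/-- `x` and `y` are opposite in the (spherical) residue `R`:
their distance has maximal length among chambers of `R`. -/
def OppChambersIn (R : Set C) (x y : C) : Prop :=
  x ∈ R ∧ y ∈ R ∧ ∀ z ∈ R, cs.length (δ x z) ≤ cs.length (δ x y)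

/-- The residues `P` and `Q` are opposite in `R`. -/
def OppResiduesIn (R P Q : Set C) : Prop :=
  P ⊆ R ∧ Q ⊆ R ∧ ∀ p ∈ P, ∃ q ∈ Q, OppChambersIn cs δ R p q

/-- `(P 0, …, P m)` is a compatible path of panels, where for `1 ≤ i ≤ m` the
set `R i` is the unique rank-2 spherical residue `R(P (i-1), P i)` in which the
consecutive panels `P (i-1)` and `P i` are opposite. -/
def IsCompatiblePath (m : ℕ) (P : ℕ → Set C) (R : ℕ → Set C) : Prop :=
  (∀ i ≤ m, IsPanel cs δ (P i)) ∧
  ∀ i, 1 ≤ i → i ≤ m →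
    IsSphRank2 cs δ (R i) ∧ OppResiduesIn cs δ (R i) (P (i-1)) (P i) ∧
    projSet cs δ (R i) (P 0) = P (i-1)

/-- A triangle: three pairwise distinct rank-2 spherical residues whose mutual
projections are panels (T1), such that the two panels obtained by projecting onto any
one of them are not parallel (T2). -/
def IsTriangle (R₁ R₂ R₃ : Set C) : Prop :=
  R₁ ≠ R₂ ∧ R₂ ≠ R₃ ∧ R₁ ≠ R₃ ∧
  IsSphRank2 cs δ R₁ ∧ IsSphRank2 cs δ R₂ ∧ IsSphRank2 cs δ R₃ ∧
  IsPanel cs δ (projSet cs δ R₁ R₂) ∧ IsPanel cs δ (projSet cs δ R₂ R₁) ∧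
  IsPanel cs δ (projSet cs δ R₁ R₃) ∧ IsPanel cs δ (projSet cs δ R₃ R₁) ∧
  IsPanel cs δ (projSet cs δ R₂ R₃) ∧ IsPanel cs δ (projSet cs δ R₃ R₂) ∧
  ¬ Parallel cs δ (projSet cs δ R₁ R₂) (projSet cs δ R₁ R₃) ∧
  ¬ Parallel cs δ (projSet cs δ R₂ R₁) (projSet cs δ R₂ R₃) ∧
  ¬ Parallel cs δ (projSet cs δ R₃ R₁) (projSet cs δ R₃ R₂)

/-! Coxeter complex notions: the building `(W, δW)` with `δW x y = x⁻¹ * y`. -/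

/-- The distance function of the Coxeter complex `Σ(W,S)`. -/
def δW : W → W → W := fun x y => x⁻¹ * y

/-- The half-space `α_i = {w | ℓ(s_i w) > ℓ(w)}`. -/
def halfspace (i : B) : Set W := {v | cs.length v < cs.length (cs.simple i * v)}

/-- The root `w · α_i` of `(W,S)`. -/
def rootW (w : W) (i : B) : Set W := (w * ·) '' halfspace cs i

/-- `α` is a root with associated reflection `t`. -/
def IsRootPair (α : Set W) (t : W) : Prop :=
  ∃ (w : W) (i : B), α = rootW cs w i ∧ t = w * cs.simple i * w⁻¹

/-- `R` belongs to `∂²α` for a root with reflection `t`: it is a spherical rank-2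
residue of the Coxeter complex stabilized by `t`. -/
def MemBd2 (t : W) (R : Set W) : Prop :=
  IsSphRank2 cs (δW (W := W)) R ∧ (t * ·) '' R = R

/-- `{α 0, α 1, α 2}` (with reflections `t 0, t 1, t 2`) is a combinatorial triangle. -/
def IsCombTriangle (α : Fin 3 → Set W) (t : Fin 3 → W) : Prop :=
  (∀ a, IsRootPair cs (α a) (t a)) ∧
  (∀ a b, a ≠ b → t a ≠ t b) ∧
  (∀ a b : Fin 3, IsOfFinOrder (t a * t b)) ∧
  (¬ ∃ R : Set W, ∀ a, MemBd2 cs (t a) R) ∧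
  (∀ a b c : Fin 3, a ≠ b → b ≠ c → a ≠ c →
    ∃ σ : Set W, MemBd2 cs (t b) σ ∧ MemBd2 cs (t c) σ ∧ σ ⊆ α a)


/-- A (type-preserving) automorphism of the building. -/
def IsAutom (g : Equiv.Perm C) : Prop := ∀ x y, δ (g x) (g y) = δ x y

/-- The simple root `α_i` of the apartment `A` determined by the base chamber `c`. -/
def simpleRootAt (A : Set C) (c : C) (i : B) : Set C :=
  {x ∈ A | cs.length (δ c x) < cs.length (cs.simple i * δ c x)}

/-- `U` is the root group associated with the root `α`: its elements are automorphisms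
fixing pointwise every panel meeting `α` in at least two chambers, and it acts simply
transitively on `P \ α` for every panel `P` meeting `α` in exactly one chamber. -/
def IsRootGroup (α : Set C) (U : Subgroup (Equiv.Perm C)) : Prop :=
  (∀ g ∈ U, IsAutom δ g) ∧
  (∀ g ∈ U, ∀ P : Set C, IsPanel cs δ P → 2 ≤ (P ∩ α).ncard → ∀ x ∈ P, g x = x) ∧
  (∀ P : Set C, IsPanel cs δ P → (P ∩ α).ncard = 1 →
    ∀ x ∈ P \ α, ∀ y ∈ P \ α, ∃! g : Equiv.Perm C, g ∈ U ∧ g x = y)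

/-- Opposite chambers in a spherical building: their distance has maximal length in `W`. -/
def OppositeChambers (x y : C) : Prop := ∀ u : W, cs.length u ≤ cs.length (δ x y)

/-- Opposite panels in a spherical building. -/
def OppositePanels (P Q : Set C) : Prop :=
  (∀ p ∈ P, ∃ q ∈ Q, OppositeChambers cs δ p q) ∧
  (∀ q ∈ Q, ∃ p ∈ P, OppositeChambers cs δ q p)

/-!
Projections onto residues are gates: `proj_R c` is the chamber `g ∈ R` with
`ℓ δ(c, y) = ℓ δ(c, g) + ℓ δ(g, y)` for all `y ∈ R`. A chamber of `R = R_J(x)` nearest to `c`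
is one, because `δ(c, g)` then has minimal length in the coset `δ(c, x) W_J`, and such coset
elements are `J`-reduced; this Coxeter-group fact comes from the exchange condition, which in
turn comes from the sign representation of `W` on `W × ℤˣ`.

If `Σ` is convex and meets `R`, then `proj_R c ∈ Σ` for `c ∈ Σ`: a chamber of `Σ ∩ R` other
than the gate can be replaced by a chamber of `Σ ∩ R` nearer to `c`, namely the projection of
`c` onto one of its panels. Hence `proj_{Σ ∩ R} = proj_R` on `Σ`. Finally, for `x = proj_R t`
with `t ∈ T`, the gate identities and the triangle inequality force `proj_R (proj_T x) = x`,
and `proj_T x ∈ Σ ∩ T`.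
-/

local prefix:100 "σ" => cs.simple
local prefix:100 "π" => cs.wordProd
local prefix:100 "ℓ" => cs.length

namespace CoxeterSign

/-- The generators of the sign representation of Björner–Brenti, *Combinatorics of Coxeter
groups*, §1.4. -/
def sigmaPerm (i : B) : Equiv.Perm (W × ℤˣ) :=
  Function.Involutive.toPerm
    (fun p => (σ i * p.1 * σ i, if p.1 = σ i then -p.2 else p.2)) <| by
    rintro ⟨t, ε⟩
    have : σ i * t * σ i = σ i ↔ t = σ i := by
      constructor <;> intro h
      · simpa [mul_assoc] using congrArg (fun u => σ i * u * σ i) h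
      · simp [h]
    simp only [this]
    by_cases ht : t = σ i <;> simp [ht, mul_assoc]

lemma sigmaPerm_apply (i : B) (t : W) (ε : ℤˣ) :
    sigmaPerm cs i (t, ε) = (σ i * t * σ i, if t = σ i then -ε else ε) := rfl

lemma prod_map_sigmaPerm_apply (ω : List B) (t : W) (ε : ℤˣ) :
    (ω.map (sigmaPerm cs)).prod (t, ε) =
      (π ω * t * (π ω)⁻¹,
        ε * (-1) ^ (cs.leftInvSeq ω).count (π ω * t * (π ω)⁻¹)) := by
  induction ω with
  | nil => simp
  | cons i ω ih =>
    set u := π ω * t * (π ω)⁻¹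
    have hconj : π (i :: ω) * t * (π (i :: ω))⁻¹ = MulAut.conj (σ i) u := by
      simp [u, cs.wordProd_cons, mul_assoc]
    have hcount : (σ i == MulAut.conj (σ i) u) = (u == σ i) := by
      simp only [MulAut.conj_apply, cs.inv_simple, beq_eq_beq]
      constructor <;> intro h
      · simpa [mul_assoc] using (congrArg (fun v => σ i * v * σ i) h).symm
      · simp [h]
    rw [List.map_cons, List.prod_cons, Equiv.Perm.mul_apply, ih, sigmaPerm_apply, hconj,
      CoxeterSystem.leftInvSeq, List.count_cons,
      List.count_map_of_injective _ _ (MulAut.conj _).injective, hcount]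
    by_cases hu : u = σ i <;> simp [hu, pow_succ]

/-- The reflections of this word repeat with period `M i j`. -/
lemma even_count_leftInvSeq_alternatingWord (i j : B) (t : W) :
    Even ((cs.leftInvSeq (CoxeterSystem.alternatingWord i j (2 * M i j))).count t) := by
  set f : ℕ → W := fun k => σ i * (σ j * σ i) ^ k
  have hlis : cs.leftInvSeq (CoxeterSystem.alternatingWord i j (2 * M i j)) =
      (List.range (2 * M i j)).map f := by
    refine List.ext_getElem (by simp) fun k hk _ => ?_
    rw [cs.getElem_leftInvSeq_alternatingWord i j _ k (by simpa using hk),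
      cs.prod_alternatingWord_eq_mul_pow]
    simp [f, Nat.mul_add_div]
  have hper : f ∘ (M i j + ·) = f := by
    funext k; simp [f, pow_add, cs.simple_mul_simple_pow']
  rw [hlis, two_mul, List.range_add, List.map_append, List.map_map, hper, List.count_append]
  exact ⟨_, rfl⟩

lemma isLiftable_sigmaPerm : M.IsLiftable (sigmaPerm cs) := by
  intro i j
  have hword : ∀ m : ℕ, (sigmaPerm cs i * sigmaPerm cs j) ^ m =
      ((CoxeterSystem.alternatingWord i j (2 * m)).map (sigmaPerm cs)).prod := by
    intro m
    induction m with
    | zero => simp [CoxeterSystem.alternatingWord]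
    | succ m ih =>
      rw [pow_succ', ih, show 2 * (m + 1) = 2 * m + 1 + 1 by ring,
        CoxeterSystem.alternatingWord_succ', CoxeterSystem.alternatingWord_succ']
      simp [mul_assoc]
  ext ⟨t, ε⟩ <;>
  · rw [hword, prod_map_sigmaPerm_apply, cs.prod_alternatingWord_eq_mul_pow,
      (even_count_leftInvSeq_alternatingWord cs i j _).neg_one_pow]
    simp [cs.simple_mul_simple_pow]

def signRep : W →* Equiv.Perm (W × ℤˣ) := cs.lift ⟨sigmaPerm cs, isLiftable_sigmaPerm cs⟩

lemma signRep_wordProd (ω : List B) : signRep cs (π ω) = (ω.map (sigmaPerm cs)).prod := by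
  rw [CoxeterSystem.wordProd, map_list_prod, List.map_map]
  congr 2
  funext i
  exact cs.lift_apply_simple (isLiftable_sigmaPerm cs) i

end CoxeterSign

open CoxeterSign

/-- The sign `η(w, t) = ±1`: for a reflection `t` it is `-1` iff `ℓ (w * t) < ℓ w`. -/
def reflSign (w t : W) : ℤˣ := (signRep cs w (t, 1)).2

lemma signRep_apply (w t : W) (ε : ℤˣ) :
    signRep cs w (t, ε) = (w * t * w⁻¹, ε * reflSign cs w t) := by
  obtain ⟨ω, rfl⟩ := cs.wordProd_surjective w
  simp [reflSign, signRep_wordProd, prod_map_sigmaPerm_apply]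

lemma reflSign_wordProd (ω : List B) (t : W) :
    reflSign cs (π ω) t = (-1) ^ (cs.leftInvSeq ω).count (π ω * t * (π ω)⁻¹) := by
  simp [reflSign, signRep_wordProd, prod_map_sigmaPerm_apply]

lemma reflSign_mul (w₁ w₂ t : W) :
    reflSign cs (w₁ * w₂) t = reflSign cs w₂ t * reflSign cs w₁ (w₂ * t * w₂⁻¹) := by
  have h : signRep cs (w₁ * w₂) (t, 1) = signRep cs w₁ (signRep cs w₂ (t, 1)) := by
    rw [map_mul]; rfl
  rw [signRep_apply, signRep_apply, signRep_apply, Prod.mk.injEq, one_mul, one_mul] at h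
  exact h.2

lemma reflSign_simple_self (i : B) : reflSign cs (σ i) (σ i) = -1 := by
  simp [reflSign, signRep, cs.lift_apply_simple (isLiftable_sigmaPerm cs), sigmaPerm_apply]

lemma length_mul_lt_of_reflSign_eq_neg_one {w t : W} (h : reflSign cs w t = -1) :
    ℓ (w * t) < ℓ w := by
  obtain ⟨ω, hω, rfl⟩ := cs.exists_isReduced w
  rw [reflSign_wordProd] at h
  have hmem : π ω * t * (π ω)⁻¹ ∈ cs.leftInvSeq ω := by
    by_contra hnot
    simp [List.count_eq_zero_of_not_mem hnot] at h
  simpa [mul_assoc] using (cs.isLeftInversion_of_mem_leftInvSeq hω hmem).2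

lemma reflSign_simple_eq_neg_one_iff (w : W) (i : B) :
    reflSign cs w (σ i) = -1 ↔ ℓ (w * σ i) < ℓ w := by
  refine ⟨length_mul_lt_of_reflSign_eq_neg_one cs, fun h => ?_⟩
  have hcocycle := reflSign_mul cs (w * σ i) (σ i) (σ i)
  simp only [cs.simple_mul_simple_cancel_right, cs.inv_simple, reflSign_simple_self] at hcocycle
  rcases Int.units_eq_one_or (reflSign cs (w * σ i) (σ i)) with h1 | h1
  · simpa [h1] using hcocycle
  · have := length_mul_lt_of_reflSign_eq_neg_one cs h1
    rw [cs.simple_mul_simple_cancel_right] at this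
    omega

/-- The exchange condition. -/
lemma exists_eraseIdx_eq_mul_simple {ω : List B} {i : B}
    (h : ℓ (π ω * σ i) < ℓ (π ω)) :
    ∃ k < ω.length, π (ω.eraseIdx k) = π ω * σ i := by
  have hsign := (reflSign_simple_eq_neg_one_iff cs _ i).mpr h
  rw [reflSign_wordProd] at hsign
  have hmem : π ω * σ i * (π ω)⁻¹ ∈ cs.leftInvSeq ω := by
    by_contra hnot
    simp [List.count_eq_zero_of_not_mem hnot] at hsign
  obtain ⟨k, hk, hkeq⟩ := List.getElem_of_mem hmem
  refine ⟨k, by simpa using hk, ?_⟩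
  rw [← cs.getD_leftInvSeq_mul_wordProd, List.getD_eq_getElem _ _ hk, hkeq]
  group

lemma simple_mem_parab {J : Set B} {j : B} (hj : j ∈ J) : σ j ∈ parab cs J :=
  Subgroup.subset_closure ⟨j, hj, rfl⟩

lemma parab_univ : parab cs (Set.univ : Set B) = ⊤ := by
  rw [parab, Set.image_univ, cs.subgroup_closure_range_simple]

lemma parab_mono {J K : Set B} (h : J ⊆ K) : parab cs J ≤ parab cs K :=
  Subgroup.closure_mono (Set.image_mono h)

lemma exists_isReduced_sublist (ω : List B) :
    ∃ ρ, cs.IsReduced ρ ∧ π ρ = π ω ∧ ρ.Sublist ω := by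
  induction ω using List.reverseRecOn with
  | nil => exact ⟨[], by simp [CoxeterSystem.IsReduced], rfl, .slnil⟩
  | append_singleton ω i ih =>
    obtain ⟨ρ, hρ, hπ, hsub⟩ := ih
    have hπi : π (ω ++ [i]) = π ρ * σ i := by simp [cs.wordProd_append, hπ]
    rcases cs.length_mul_simple (π ρ) i with hup | hdown
    · refine ⟨ρ ++ [i], ?_, by simp [cs.wordProd_append, hπ], hsub.append (.refl _)⟩
      simp [CoxeterSystem.IsReduced, cs.wordProd_append, hup, hρ.eq]
    · obtain ⟨k, hk, hke⟩ := exists_eraseIdx_eq_mul_simple cs (i := i) (ω := ρ) (by omega)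
      refine ⟨ρ.eraseIdx k, ?_, by rw [hke, hπi],
        (List.eraseIdx_sublist ρ k).trans (hsub.trans (List.sublist_append_left ω [i]))⟩
      rw [CoxeterSystem.IsReduced, hke, List.length_eraseIdx_of_lt hk, ← hρ.eq]
      omega

lemma exists_isReduced_of_mem_parab {J : Set B} {v : W} (hv : v ∈ parab cs J) :
    ∃ ω, cs.IsReduced ω ∧ (∀ j ∈ ω, j ∈ J) ∧ π ω = v := by
  obtain ⟨ω, hωJ, rfl⟩ : ∃ ω : List B, (∀ j ∈ ω, j ∈ J) ∧ π ω = v := by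
    refine Subgroup.closure_induction ?_ ⟨[], by simp, rfl⟩ ?_ ?_ hv
    · rintro _ ⟨j, hj, rfl⟩
      exact ⟨[j], by simpa using hj, cs.wordProd_singleton j⟩
    · rintro _ _ _ _ ⟨ω₁, h₁, rfl⟩ ⟨ω₂, h₂, rfl⟩
      exact ⟨ω₁ ++ ω₂, by simpa using fun j hj => hj.elim (h₁ j) (h₂ j),
        cs.wordProd_append _ _⟩
    · rintro _ _ ⟨ω, h, rfl⟩
      exact ⟨ω.reverse, by simpa using h, cs.wordProd_reverse ω⟩
  obtain ⟨ρ, hρ, hπ, hsub⟩ := exists_isReduced_sublist cs ω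
  exact ⟨ρ, hρ, fun j hj => hωJ j (hsub.subset hj), hπ⟩

lemma exists_rightDescent_mem_of_mem_parab {J : Set B} {v : W} (hv : v ∈ parab cs J)
    (h1 : v ≠ 1) : ∃ j ∈ J, ℓ (v * σ j) < ℓ v := by
  obtain ⟨ω, hω, hωJ, rfl⟩ := exists_isReduced_of_mem_parab cs hv
  rcases List.eq_nil_or_concat' ω with rfl | ⟨ω', j, rfl⟩
  · exact absurd cs.wordProd_nil h1
  · refine ⟨j, hωJ j (by simp), ?_⟩
    have hlen := hω.eq
    rw [List.length_append, List.length_singleton] at hlen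
    rw [hlen, cs.wordProd_append, cs.wordProd_singleton, cs.simple_mul_simple_cancel_right]
    exact (cs.length_wordProd_le ω').trans_lt (Nat.lt_succ_self _)

lemma length_mul_eq_of_forall_le {J : Set B} {w : W}
    (hmin : ∀ u ∈ parab cs J, ℓ w ≤ ℓ (w * u)) {v : W} (hv : v ∈ parab cs J) :
    ℓ (w * v) = ℓ w + ℓ v := by
  induction hn : ℓ v using Nat.strong_induction_on generalizing v with
  | _ n ih =>
  by_cases h1 : v = 1
  · subst h1; simp [← hn]
  obtain ⟨j, hj, hlt⟩ := exists_rightDescent_mem_of_mem_parab cs hv h1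
  obtain ⟨v', rfl⟩ : ∃ v', v = v' * σ j :=
    ⟨v * σ j, (cs.simple_mul_simple_cancel_right j).symm⟩
  rw [cs.simple_mul_simple_cancel_right] at hlt
  have hv' : v' ∈ parab cs J := by
    simpa using mul_mem hv (simple_mem_parab cs hj)
  have hlen : ℓ v' + 1 = ℓ (v' * σ j) := by
    rcases cs.length_mul_simple v' j with h | h <;> omega
  have ih' := ih (ℓ v') (by omega) hv' rfl
  suffices ℓ (w * v' * σ j) = ℓ (w * v') + 1 by rw [← mul_assoc, this, ih']; omega
  refine (cs.length_mul_simple (w * v') j).resolve_right fun hdown => ?_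
  -- `σ j` lengthens `v'` but shortens `w * v'`, so by the cocycle identity the reflection
  -- `v' * σ j * v'⁻¹ ∈ W_J` shortens `w`, against minimality.
  have hneg := (reflSign_simple_eq_neg_one_iff cs (w * v') j).mpr (by omega)
  have hpos : reflSign cs v' (σ j) = 1 := by
    refine (Int.units_eq_one_or _).resolve_right fun h => ?_
    have := length_mul_lt_of_reflSign_eq_neg_one cs h
    omega
  rw [reflSign_mul, hpos, one_mul] at hneg
  have hshort := length_mul_lt_of_reflSign_eq_neg_one cs hneg
  have hrefl : v' * σ j * v'⁻¹ ∈ parab cs J :=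
    mul_mem (mul_mem hv' (simple_mem_parab cs hj)) (inv_mem hv')
  have := hmin _ hrefl
  omega

def IsConvex (A : Set C) : Prop :=
  ∀ P : Set C, IsPanel cs δ P → (P ∩ A).Nonempty → ∀ c ∈ A, proj cs δ P c ∈ A

section

variable {cs δ}

lemma IsApartment.isConvex {A : Set C} (hA : IsApartment cs δ A) : IsConvex cs δ A := hA.2.1

end

namespace IsBuilding

variable {cs δ}

lemma delta_self (hb : IsBuilding cs δ) (x : C) : δ x x = 1 := (hb.eq_one_iff x x).mpr rfl

lemma eq_of_length_delta_eq_zero (hb : IsBuilding cs δ) {x y : C} (h : ℓ (δ x y) = 0) :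
    x = y :=
  (hb.eq_one_iff x y).mp (cs.length_eq_zero_iff.mp h)

lemma delta_comm_of_eq_simple (hb : IsBuilding cs δ) {x y : C} {i : B} (h : δ x y = σ i) :
    δ y x = σ i := by
  rcases hb.step y x y i h with h1 | h1 <;> rw [hb.delta_self] at h1
  · obtain rfl := (hb.eq_one_iff y x).mp h1.symm
    have := cs.length_simple i
    rw [← h, hb.delta_self, cs.length_one] at this
    omega
  · simpa [mul_assoc] using congrArg (· * σ i) h1.symm

/-- Induction on `ℓ (δ y z)` along minimal galleries from `y` inside its `J`-residue. -/
theorem induction_on_residue (hb : IsBuilding cs δ) {J : Set B} (y : C) {P : C → Prop}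
    (base : P y)
    (step : ∀ u z (j : B), j ∈ J → δ y u = δ y z * σ j → δ u z = σ j →
      ℓ (δ y u) + 1 = ℓ (δ y z) → P u → P z)
    {z : C} (hz : δ y z ∈ parab cs J) : P z := by
  induction hn : ℓ (δ y z) using Nat.strong_induction_on generalizing z with
  | _ n ih =>
  by_cases h1 : δ y z = 1
  · rwa [← (hb.eq_one_iff y z).mp h1]
  obtain ⟨j, hj, hlt⟩ := exists_rightDescent_mem_of_mem_parab cs hz h1
  obtain ⟨u, hzu, hyu⟩ := hb.exists_step y z j
  have hlen : ℓ (δ y u) + 1 = ℓ (δ y z) := by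
    rw [hyu]; rcases cs.length_mul_simple (δ y z) j with h | h <;> omega
  refine step u z j hj hyu (hb.delta_comm_of_eq_simple hzu) hlen (ih _ (by omega) ?_ rfl)
  rw [hyu]
  exact mul_mem hz (simple_mem_parab cs hj)

theorem induction_on_delta (hb : IsBuilding cs δ) (y : C) {P : C → Prop} (base : P y)
    (step : ∀ u z (j : B), δ y u = δ y z * σ j → δ u z = σ j →
      ℓ (δ y u) + 1 = ℓ (δ y z) → P u → P z)
    (z : C) : P z :=
  hb.induction_on_residue (J := Set.univ) y base (fun u z j _ => step u z j)
    (by simp [parab_univ])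

lemma delta_mul_of_length_add (hb : IsBuilding cs δ) {x y z : C}
    (h : ℓ (δ x y * δ y z) = ℓ (δ x y) + ℓ (δ y z)) : δ x z = δ x y * δ y z := by
  induction z using hb.induction_on_delta y with
  | base => rw [hb.delta_self, mul_one]
  | step u z j hyu huz hlen ih =>
    have hzu : δ x y * δ y z = δ x y * δ y u * σ j := by
      rw [hyu, mul_assoc, cs.simple_mul_simple_cancel_right]
    have hu : ℓ (δ x y * δ y u) = ℓ (δ x y) + ℓ (δ y u) := by
      have h₁ := cs.length_mul_le (δ x y) (δ y u)
      have h₂ := cs.length_mul_le (δ x y * δ y u) (σ j)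
      rw [cs.length_simple, ← hzu] at h₂
      omega
    have hxu := ih hu
    rw [hb.step_of_length x u z j huz (by rw [hxu, ← hzu]; omega), hxu, hzu]

lemma delta_inv (hb : IsBuilding cs δ) (x y : C) : δ y x = (δ x y)⁻¹ := by
  induction y using hb.induction_on_delta x with
  | base => rw [hb.delta_self, inv_one]
  | step u z j hxu huz hlen ih =>
    have hux : δ u x = σ j * (δ x z)⁻¹ := by rw [ih, hxu, mul_inv_rev, cs.inv_simple]
    have hzu := hb.delta_comm_of_eq_simple huz
    have hcancel : δ z u * δ u x = (δ x z)⁻¹ := by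
      rw [hzu, hux, ← mul_assoc, cs.simple_mul_simple_self, one_mul]
    rw [hb.delta_mul_of_length_add (y := u), hcancel]
    rw [hcancel, cs.length_inv, hzu, cs.length_simple, ih, cs.length_inv]
    omega

lemma length_delta_comm (hb : IsBuilding cs δ) (x y : C) : ℓ (δ y x) = ℓ (δ x y) := by
  rw [hb.delta_inv, cs.length_inv]

lemma length_delta_le (hb : IsBuilding cs δ) (x y z : C) :
    ℓ (δ x z) ≤ ℓ (δ x y) + ℓ (δ y z) := by
  induction z using hb.induction_on_delta y with
  | base => simp [hb.delta_self]
  | step u z j _ huz hlen ih =>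
    have : ℓ (δ x z) ≤ ℓ (δ x u) + 1 := by
      rcases hb.step x u z j huz with h | h
      · rw [h]; omega
      · simpa [h, cs.length_simple] using cs.length_mul_le (δ x u) (σ j)
    omega

lemma inv_delta_mul_delta_mem_parab (hb : IsBuilding cs δ) {J : Set B} (x : C) {y z : C}
    (hyz : δ y z ∈ parab cs J) : (δ x y)⁻¹ * δ x z ∈ parab cs J := by
  refine hb.induction_on_residue (P := fun z => (δ x y)⁻¹ * δ x z ∈ parab cs J) y (by simp)
    (fun u z j hj _ huz _ ih => ?_) hyz
  rcases hb.step x u z j huz with h | h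
  · rwa [h]
  · rw [h, ← mul_assoc]
    exact mul_mem ih (simple_mem_parab cs hj)

lemma delta_mem_parab_symm (hb : IsBuilding cs δ) {J : Set B} {x y : C}
    (h : δ x y ∈ parab cs J) : δ y x ∈ parab cs J := by
  rw [hb.delta_inv]; exact inv_mem h

lemma delta_mem_parab_trans (hb : IsBuilding cs δ) {J : Set B} {x y z : C}
    (hxy : δ x y ∈ parab cs J) (hyz : δ y z ∈ parab cs J) : δ x z ∈ parab cs J := by
  simpa using mul_mem hxy (hb.inv_delta_mul_delta_mem_parab x hyz)

lemma mem_residue_self (hb : IsBuilding cs δ) (J : Set B) (x : C) : x ∈ residue cs δ J x := by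
  simp [residue, hb.delta_self]

lemma delta_mem_parab_of_mem_residue (hb : IsBuilding cs δ) {J : Set B} {x y z : C}
    (hy : y ∈ residue cs δ J x) (hz : z ∈ residue cs δ J x) : δ y z ∈ parab cs J :=
  hb.delta_mem_parab_trans (hb.delta_mem_parab_symm hy) hz

lemma exists_mem_residue_delta_eq_mul (hb : IsBuilding cs δ) {J : Set B} (c x : C) {v : W}
    (hv : v ∈ parab cs J) : ∃ y ∈ residue cs δ J x, δ c y = δ c x * v := by
  obtain ⟨ω, -, hωJ, rfl⟩ := exists_isReduced_of_mem_parab cs hv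
  clear hv
  induction ω using List.reverseRecOn with
  | nil => exact ⟨x, hb.mem_residue_self J x, by simp⟩
  | append_singleton ω j ih =>
    obtain ⟨y, hy, hcy⟩ := ih fun i hi => hωJ i (by simp [hi])
    obtain ⟨u, hyu, hcu⟩ := hb.exists_step c y j
    refine ⟨u, ?_, by rw [hcu, hcy, cs.wordProd_append, cs.wordProd_singleton, mul_assoc]⟩
    have hj : σ j ∈ parab cs J := simple_mem_parab cs (hωJ j (by simp))
    show δ x u ∈ parab cs J
    rcases hb.step x y u j hyu with h | h <;> rw [h]
    · exact hy
    · exact mul_mem hy hj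

/-- The gate is a chamber of the residue nearest to `c`. -/
lemma exists_isGate (hb : IsBuilding cs δ) (J : Set B) (x c : C) :
    ∃ g, IsGate cs δ (residue cs δ J x) c g := by
  set R := residue cs δ J x
  set g := Function.argminOn (fun y => ℓ (δ c y)) R ⟨x, hb.mem_residue_self J x⟩
  have hgR : g ∈ R := Function.argminOn_mem _ _ _
  have hmin : ∀ u ∈ parab cs J, ℓ (δ c g) ≤ ℓ (δ c g * u) := by
    intro u hu
    obtain ⟨y, hy, hcy⟩ := hb.exists_mem_residue_delta_eq_mul c g hu
    rw [← hcy]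
    exact Function.argminOn_le (fun y => ℓ (δ c y)) R
      (hb.delta_mem_parab_trans hgR hy)
  refine ⟨g, hgR, fun y hy => ?_⟩
  have hadd := length_mul_eq_of_forall_le cs hmin (hb.delta_mem_parab_of_mem_residue hgR hy)
  rw [hb.delta_mul_of_length_add hadd, hadd]

lemma isGate_unique (hb : IsBuilding cs δ) {R : Set C} {c g g' : C}
    (h : IsGate cs δ R c g) (h' : IsGate cs δ R c g') : g = g' := by
  have h₁ := h.2 g' h'.1
  have h₂ := h'.2 g h.1
  have h₃ := hb.length_delta_comm g g'
  exact hb.eq_of_length_delta_eq_zero (by omega)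

lemma proj_eq_of_isGate (hb : IsBuilding cs δ) {R : Set C} {c g : C}
    (h : IsGate cs δ R c g) : proj cs δ R c = g := by
  have hex : ∃ g, IsGate cs δ R c g := ⟨g, h⟩
  rw [proj, dif_pos hex]
  exact hb.isGate_unique hex.choose_spec h

lemma isGate_proj (hb : IsBuilding cs δ) {R : Set C} (hR : IsResidue cs δ R) (c : C) :
    IsGate cs δ R c (proj cs δ R c) := by
  obtain ⟨J, x, rfl⟩ := hR
  obtain ⟨g, hg⟩ := hb.exists_isGate J x c
  rwa [hb.proj_eq_of_isGate hg]

/-- The step towards the gate: the projection of `c` onto a suitable panel of `a`. -/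
lemma exists_mem_inter_residue_length_lt (hb : IsBuilding cs δ) {A : Set C}
    (hA : IsConvex cs δ A) {J : Set B} {x c a g : C} (hc : c ∈ A) (haA : a ∈ A)
    (haR : a ∈ residue cs δ J x) (hg : IsGate cs δ (residue cs δ J x) c g) (hag : a ≠ g) :
    ∃ a' ∈ A ∩ residue cs δ J x, ℓ (δ c a') < ℓ (δ c a) := by
  have hga := hb.delta_mem_parab_of_mem_residue hg.1 haR
  obtain ⟨j, hj, hlt⟩ := exists_rightDescent_mem_of_mem_parab cs hga
    fun h => hag ((hb.eq_one_iff g a).mp h).symm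
  obtain ⟨u, hau, hgu⟩ := hb.exists_step g a j
  have hjJ : parab cs {j} ≤ parab cs J := parab_mono cs (by simpa using hj)
  have huP : u ∈ residue cs δ {j} a := by
    show δ a u ∈ parab cs {j}
    rw [hau]; exact simple_mem_parab cs rfl
  have huR : u ∈ residue cs δ J x := hb.delta_mem_parab_trans haR (hjJ huP)
  have hcu : ℓ (δ c u) < ℓ (δ c a) := by
    rw [hg.2 u huR, hg.2 a haR, hgu]; omega
  have hP : IsPanel cs δ (residue cs δ {j} a) := ⟨j, a, rfl⟩
  have hpA := hA _ hP ⟨a, hb.mem_residue_self _ a, haA⟩ c hc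
  have hp := hb.isGate_proj ⟨{j}, a, rfl⟩ c
  generalize proj cs δ (residue cs δ {j} a) c = p at hpA hp
  refine ⟨p, ⟨hpA, hb.delta_mem_parab_trans haR (hjJ hp.1)⟩, ?_⟩
  have := hp.2 u huP
  omega

lemma proj_mem_of_isConvex (hb : IsBuilding cs δ) {A R : Set C} (hR : IsResidue cs δ R)
    (hA : IsConvex cs δ A) (hAR : (A ∩ R).Nonempty) {c : C} (hc : c ∈ A) :
    proj cs δ R c ∈ A := by
  obtain ⟨J, x, rfl⟩ := hR
  obtain ⟨a, haA, haR⟩ := hAR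
  induction hn : ℓ (δ c a) using Nat.strong_induction_on generalizing a with
  | _ n ih =>
  by_cases hag : a = proj cs δ (residue cs δ J x) c
  · rwa [← hag]
  obtain ⟨a', ⟨ha'A, ha'R⟩, hlt⟩ :=
    hb.exists_mem_inter_residue_length_lt hA hc haA haR (hb.isGate_proj ⟨J, x, rfl⟩ c) hag
  exact ih _ (hn ▸ hlt) a' ha'A ha'R rfl

lemma proj_inter_eq_proj (hb : IsBuilding cs δ) {A R : Set C} (hR : IsResidue cs δ R) {c : C}
    (h : proj cs δ R c ∈ A) : proj cs δ (A ∩ R) c = proj cs δ R c :=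
  have hg := hb.isGate_proj hR c
  hb.proj_eq_of_isGate ⟨⟨h, hg.1⟩, fun y hy => hg.2 y hy.2⟩

/-- `proj_R ∘ proj_T` fixes `proj_R T`: compare the gate identities of `x = proj_R t`,
`proj_T x` and `proj_R (proj_T x)` with the triangle inequality. -/
lemma proj_proj_eq_of_mem_projSet (hb : IsBuilding cs δ) {R T : Set C} (hR : IsResidue cs δ R)
    (hT : IsResidue cs δ T) {x : C} (hx : x ∈ projSet cs δ R T) :
    proj cs δ R (proj cs δ T x) = x := by
  obtain ⟨t, htT, rfl⟩ := hx
  have hx := hb.isGate_proj hR t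
  have ht' := hb.isGate_proj hT (proj cs δ R t)
  have hx' := hb.isGate_proj hR (proj cs δ T (proj cs δ R t))
  generalize proj cs δ R (proj cs δ T (proj cs δ R t)) = x' at hx' ⊢
  generalize proj cs δ T (proj cs δ R t) = t' at ht' hx'
  generalize proj cs δ R t = x at hx ht' ⊢
  have h₁ := hx.2 x' hx'.1
  have h₂ := hx'.2 x hx.1
  have h₃ := ht'.2 t htT
  have h₄ := hb.length_delta_le t t' x'
  have := hb.length_delta_comm t x
  have := hb.length_delta_comm t' x
  have := hb.length_delta_comm t t'
  have := hb.length_delta_comm x x'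
  exact (hb.eq_of_length_delta_eq_zero (by omega)).symm

end IsBuilding

/-- For residues `R, T` and an apartment `A` meeting both,
`A ∩ proj_R T = proj_{A∩R} (A ∩ T)`. -/
theorem statement4 (hb : IsBuilding cs δ) {R T A : Set C} (hR : IsResidue cs δ R)
    (hT : IsResidue cs δ T) (hA : IsApartment cs δ A)
    (hAR : (A ∩ R).Nonempty) (hAT : (A ∩ T).Nonempty) :
    A ∩ projSet cs δ R T = projSet cs δ (A ∩ R) (A ∩ T) := by
  ext x
  constructor
  · rintro ⟨hxA, hx⟩
    have hretract := hb.proj_proj_eq_of_mem_projSet hR hT hx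
    refine ⟨proj cs δ T x, ⟨hb.proj_mem_of_isConvex hT hA.isConvex hAT hxA,
      (hb.isGate_proj hT x).1⟩, ?_⟩
    rw [hb.proj_inter_eq_proj hR (by rwa [hretract]), hretract]
  · rintro ⟨t, ⟨htA, htT⟩, rfl⟩
    have hproj := hb.proj_mem_of_isConvex hR hA.isConvex hAR htA
    rw [hb.proj_inter_eq_proj hR hproj]
    exact ⟨hproj, t, htT, rfl⟩

end BldgPaper
end
end

section
/- Let Δ = (C, δ) be a building of type (W, S), let (d_0, …, d_k) be a minimal gallery and c a chamber. Let Σ be an apartment containing c, d_0, …, d_{k-1}, and suppose no apartment contains c, d_0, …, d_k. Let e ∈ Σ with δ(d_{k-1}, e) = δ(d_{k-1}, d_k), and let α be the unique root of Σ containing d_{k-1} but not e. Then c ∉ α. -/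
noncomputable section
open Classical

namespace BldgPaper

variable {B W : Type*} [Group W] {M : CoxeterMatrix B}

variable (cs : CoxeterSystem M W) {C : Type*} (δ : C → C → W)

/-!
Suppose `c ∈ α`, and let `f` map `α` isometrically onto the half-space `α_i` of `W`. The `t`-panel
of `d (k-1)` meets `A` only in `d (k-1)` and `e`, so `f (d (k-1)) * s t ∉ α_i`; an exchange argument
then gives `s i * f (d (k-1)) = f (d (k-1)) * s t`: the wall between `d (k-1)` and `e` is the wall
of `α`. Hence every chamber of `α`, in particular `c`, is strictly closer to `d (k-1)` than to `e`,
so `δ c (d k) = δ c (d (k-1)) * s t`; minimality of the gallery gives the same for every `d i`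
with `i < k`. So `{c, d 0, …, d k}` is isometric to a subset of `W`. By Zorn's lemma such a partial
isometry extends to an isometry defined on all of `W`, and its image is an apartment containing
`c, d 0, …, d k`, a contradiction.
-/

theorem simple_ne_one (i : B) : cs.simple i ≠ 1 := fun h => by
  simpa [h] using cs.length_simple i

theorem exists_length_mul_simple_add_one_eq {w : W} (hw : w ≠ 1) :
    ∃ i, cs.length (w * cs.simple i) + 1 = cs.length w := by
  obtain ⟨i, hi⟩ := cs.exists_rightDescent_of_ne_one hw
  have := cs.length_mul_simple w i
  unfold CoxeterSystem.IsRightDescent at hi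
  exact ⟨i, by omega⟩

theorem mem_parab_singleton {i : B} {w : W} : w ∈ parab cs {i} ↔ w = 1 ∨ w = cs.simple i := by
  have horder : orderOf (cs.simple i) = 2 :=
    orderOf_eq_prime (by rw [sq, cs.simple_mul_simple_self]) (simple_ne_one cs i)
  rw [parab, Set.image_singleton, ← Subgroup.zpowers_eq_closure,
    (orderOf_pos_iff.mp (by omega)).mem_zpowers_iff_mem_range_orderOf, horder]
  simp [Nat.le_one_iff_eq_zero_or_eq_one, or_and_right, exists_or, eq_comm]

section SignRepresentation

/- Tits' representation of `W` on `W × ℤˣ`: `s i` conjugates the first coordinate and flips the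
sign when it equals `s i`. Evaluated on a word, it shows that the parity of the number of
occurrences of `t` in the right inversion sequence depends only on the product of the word. -/

private def sgn (P : Prop) : ℤˣ := if P then -1 else 1

private theorem sgn_mul_self (P : Prop) : sgn P * sgn P = 1 := by
  unfold sgn; split_ifs <;> simp

private theorem simple_conj_simple_conj (i : B) (t : W) :
    cs.simple i * (cs.simple i * t * cs.simple i) * cs.simple i = t := by
  simp [mul_assoc]

private theorem simple_conj_eq_iff (i : B) (t u : W) :
    cs.simple i * t * cs.simple i = u ↔ t = cs.simple i * u * cs.simple i := by
  constructor <;> rintro rfl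
  · rw [simple_conj_simple_conj]
  · rw [simple_conj_simple_conj]

private def signAct (i : B) (p : W × ℤˣ) : W × ℤˣ :=
  (cs.simple i * p.1 * cs.simple i, p.2 * sgn (p.1 = cs.simple i))

private theorem signAct_involutive (i : B) : Function.Involutive (signAct cs i) := by
  rintro ⟨t, ε⟩
  simp only [signAct]
  rw [simple_conj_simple_conj, simple_conj_eq_iff, cs.simple_mul_simple_self, one_mul, mul_assoc,
    sgn_mul_self, mul_one]

private def signActPerm (i : B) : Equiv.Perm (W × ℤˣ) := (signAct_involutive cs i).toPerm

private theorem signActPerm_mul_signActPerm_pow_apply (i j : B) (k : ℕ) (p : W × ℤˣ) :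
    ((signActPerm cs i * signActPerm cs j) ^ k) p =
      ((cs.simple i * cs.simple j) ^ k * p.1 * ((cs.simple i * cs.simple j) ^ k)⁻¹,
        p.2 * ∏ r ∈ Finset.range (2 * k),
          sgn (cs.simple j * (cs.simple i * cs.simple j) ^ r = p.1)) := by
  set X := cs.simple i * cs.simple j
  have hXb : X⁻¹ * cs.simple j = cs.simple j * X := by simp [X, mul_assoc]
  have hshift (r : ℕ) (t : W) :
      (cs.simple j * X ^ r = X * t * X⁻¹) ↔ (cs.simple j * X ^ (r + 2) = t) := by
    have : X⁻¹ * (cs.simple j * X ^ r) * X = cs.simple j * X ^ (r + 2) := by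
      calc X⁻¹ * (cs.simple j * X ^ r) * X = (X⁻¹ * cs.simple j) * X ^ (r + 1) := by
            rw [pow_succ]; group
        _ = cs.simple j * X ^ (r + 2) := by rw [hXb, mul_assoc, ← pow_succ']
    rw [← this]
    constructor <;> intro h
    · rw [h]; group
    · rw [← h]; group
  induction k generalizing p with
  | zero => simp
  | succ k ih =>
    obtain ⟨t, ε⟩ := p
    have hstep : (signActPerm cs i * signActPerm cs j) (t, ε) =
        (X * t * X⁻¹, ε * (sgn (cs.simple j * X ^ 0 = t) * sgn (cs.simple j * X ^ 1 = t))) := by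
      simp only [Equiv.Perm.mul_apply, signActPerm, Function.Involutive.coe_toPerm, signAct]
      refine Prod.ext (by simp [X, mul_assoc]) ?_
      simp only [simple_conj_eq_iff, pow_zero, pow_one, mul_one]
      simp only [eq_comm (a := t), X, mul_assoc]
    rw [pow_succ, Equiv.Perm.mul_apply, hstep, ih]
    simp only [hshift]
    refine Prod.ext (by simp only; group) ?_
    simp only
    rw [show 2 * (k + 1) = 2 * k + 1 + 1 by ring, Finset.prod_range_succ', Finset.prod_range_succ']
    simp only [mul_assoc, mul_comm]

private theorem signActPerm_isLiftable : M.IsLiftable (signActPerm cs) := by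
  intro i j
  ext1 ⟨t, ε⟩
  have hperiod (r : ℕ) :
      sgn (cs.simple j * (cs.simple i * cs.simple j) ^ (M i j + r) = t) =
        sgn (cs.simple j * (cs.simple i * cs.simple j) ^ r = t) := by
    rw [pow_add, cs.simple_mul_simple_pow, one_mul]
  rw [signActPerm_mul_signActPerm_pow_apply, cs.simple_mul_simple_pow, two_mul,
    Finset.prod_range_add]
  simp only [hperiod, ← Finset.prod_mul_distrib, sgn_mul_self, Finset.prod_const_one, mul_one,
    one_mul, inv_one, Equiv.Perm.one_apply]

private def signRep : W →* Equiv.Perm (W × ℤˣ) :=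
  cs.lift ⟨signActPerm cs, signActPerm_isLiftable cs⟩

private theorem signRep_wordProd (ω : List B) (t : W) (ε : ℤˣ) :
    signRep cs (cs.wordProd ω) (t, ε) =
      (cs.wordProd ω * t * (cs.wordProd ω)⁻¹, ε * (-1) ^ (cs.rightInvSeq ω).count t) := by
  induction ω generalizing ε with
  | nil => simp
  | cons i ω ih =>
    rw [cs.wordProd_cons, map_mul, Equiv.Perm.mul_apply, ih, signRep,
      cs.lift_apply_simple (signActPerm_isLiftable cs)]
    have hsgn : sgn (cs.wordProd ω * t * (cs.wordProd ω)⁻¹ = cs.simple i) =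
        (-1) ^ (if (cs.wordProd ω)⁻¹ * cs.simple i * cs.wordProd ω == t then 1 else 0) := by
      have hiff : cs.wordProd ω * t * (cs.wordProd ω)⁻¹ = cs.simple i ↔
          (cs.wordProd ω)⁻¹ * cs.simple i * cs.wordProd ω = t := by
        constructor <;> intro h <;> rw [← h] <;> group
      unfold sgn
      by_cases h : (cs.wordProd ω)⁻¹ * cs.simple i * cs.wordProd ω = t <;> simp [h, hiff]
    simp only [signActPerm, Function.Involutive.coe_toPerm, signAct, CoxeterSystem.rightInvSeq,
      List.count_cons, pow_add]
    rw [hsgn]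
    refine Prod.ext ?_ (mul_assoc _ _ _)
    simp only [mul_inv_rev, cs.inv_simple, mul_assoc]

private theorem neg_one_pow_count_rightInvSeq_congr {ω ω' : List B}
    (h : cs.wordProd ω = cs.wordProd ω') (t : W) :
    (-1 : ℤˣ) ^ (cs.rightInvSeq ω).count t = (-1) ^ (cs.rightInvSeq ω').count t := by
  have := signRep_wordProd cs ω t 1
  rw [h, signRep_wordProd] at this
  simpa using (Prod.ext_iff.mp this).2.symm

end SignRepresentation

theorem simple_mul_eq_mul_simple_of_length {u : W} {i j : B}
    (hi : cs.length (cs.simple i * u) = cs.length u + 1)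
    (hj : cs.length (u * cs.simple j) = cs.length u + 1)
    (hij : cs.length (cs.simple i * u * cs.simple j) ≤ cs.length u) :
    cs.simple i * u = u * cs.simple j := by
  obtain ⟨ω, hω, rfl⟩ := cs.exists_isReduced u
  obtain ⟨ν, hν, hνu⟩ := cs.exists_isReduced (cs.simple i * cs.wordProd ω * cs.simple j)
  -- `ν ++ [j]` and `i :: ω` are reduced words for `s i * u`. The right inversion sequence of the
  -- first contains `s j` once; in that of the second, `s j` can only be the head `u⁻¹ * s i * u`.
  have hprod : cs.wordProd (ν.concat j) = cs.wordProd (i :: ω) := by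
    rw [cs.wordProd_concat, ← hνu, cs.wordProd_cons, cs.simple_mul_simple_cancel_right]
  have hred : cs.IsReduced (ν.concat j) := by
    have := cs.length_mul_simple (cs.simple i * cs.wordProd ω) j
    rw [CoxeterSystem.IsReduced, hprod, List.length_concat, ← hν.eq, ← hνu, cs.wordProd_cons]
    omega
  have hcount_concat : (cs.rightInvSeq (ν.concat j)).count (cs.simple j) = 1 :=
    List.count_eq_one_of_mem hred.nodup_rightInvSeq
      (by rw [cs.rightInvSeq_concat, List.concat_eq_append]; exact List.mem_concat_self)
  have hcount : (cs.rightInvSeq ω).count (cs.simple j) = 0 :=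
    List.count_eq_zero_of_not_mem fun hmem =>
      absurd (cs.isRightInversion_of_mem_rightInvSeq hω hmem).2 (by omega)
  have hsign := neg_one_pow_count_rightInvSeq_congr cs hprod (cs.simple j)
  rw [hcount_concat, CoxeterSystem.rightInvSeq, List.count_cons, hcount] at hsign
  by_cases hconj : (cs.wordProd ω)⁻¹ * cs.simple i * cs.wordProd ω = cs.simple j
  · rw [← hconj]; group
  · simp [hconj] at hsign

theorem mem_halfspace {i : B} {v : W} :
    v ∈ halfspace cs i ↔ cs.length v < cs.length (cs.simple i * v) := Iff.rfl

theorem length_inv_mul_mul_simple_of_mem_halfspace {i t : B} {w₀ : W}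
    (hw₀ : w₀ ∈ halfspace cs i) (hwall : cs.simple i * w₀ = w₀ * cs.simple t)
    {v : W} (hv : v ∈ halfspace cs i) :
    cs.length (v⁻¹ * w₀ * cs.simple t) = cs.length (v⁻¹ * w₀) + 1 := by
  induction hn : cs.length v using Nat.strong_induction_on generalizing v with
  | _ n ih =>
  obtain rfl | hne := eq_or_ne v 1
  · have := cs.length_simple_mul w₀ i
    rw [inv_one, one_mul, ← hwall]
    exact this.resolve_right (by rw [mem_halfspace] at hw₀; omega)
  obtain ⟨s, hs⟩ := exists_length_mul_simple_add_one_eq cs hne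
  have hvs : v * cs.simple s ∈ halfspace cs i := by
    have h1 := cs.length_simple_mul v i
    have h2 := cs.length_mul_simple (cs.simple i * v) s
    rw [mem_halfspace] at hv ⊢
    rw [← mul_assoc]
    omega
  have hih := ih _ (by omega) hvs rfl
  set u := (v * cs.simple s)⁻¹ * w₀
  have hvu : v⁻¹ * w₀ = cs.simple s * u := by simp [u, mul_assoc]
  rw [hvu]
  have h1 := cs.length_simple_mul u s
  have h2 := cs.length_mul_simple (cs.simple s * u) t
  have h3 := cs.length_simple_mul (u * cs.simple t) s
  rw [← mul_assoc] at h3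
  rcases h1 with h1 | h1
  · by_contra hcon
    have hX := simple_mul_eq_mul_simple_of_length cs h1 hih (by omega)
    have hsi : cs.simple i * v = v * cs.simple s := by
      have hst : cs.simple t = u⁻¹ * cs.simple s * u := by rw [mul_assoc, hX]; group
      have : cs.simple i = w₀ * cs.simple t * w₀⁻¹ := by rw [← hwall]; group
      rw [this, hst]
      simp only [u]
      group
    have h4 := cs.length_simple_mul v i
    rw [mem_halfspace, hsi] at hv
    omega
  · omega

theorem mem_residue_singleton_iff {i : B} {x y : C} :
    y ∈ residue cs δ {i} x ↔ δ x y = 1 ∨ δ x y = cs.simple i :=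
  mem_parab_singleton cs

def IsPartialIsometry (S : Set (W × C)) : Prop := ∀ p ∈ S, ∀ q ∈ S, δ p.2 q.2 = p.1⁻¹ * q.1

section Building

variable {cs δ} (hb : IsBuilding cs δ)
include hb

theorem dist_self (x : C) : δ x x = 1 := (hb.eq_one_iff x x).mpr rfl

theorem dist_eq_simple_symm {x y : C} {i : B} (h : δ x y = cs.simple i) :
    δ y x = cs.simple i := by
  rcases hb.step y x y i h with h1 | h1 <;> rw [dist_self hb] at h1
  · rw [(hb.eq_one_iff y x).mp h1.symm, dist_self hb] at h
    exact absurd h.symm (simple_ne_one cs i)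
  · rw [eq_inv_of_mul_eq_one_left h1.symm, cs.inv_simple]

theorem mem_residue_singleton_self (i : B) (x : C) : x ∈ residue cs δ {i} x :=
  (mem_residue_singleton_iff cs δ).mpr (Or.inl (dist_self hb x))

theorem mem_residue_singleton_comm {i : B} {x y : C} (h : y ∈ residue cs δ {i} x) :
    x ∈ residue cs δ {i} y := by
  rw [mem_residue_singleton_iff] at h ⊢
  rcases h with h | h
  · rw [(hb.eq_one_iff x y).mp h]; exact Or.inl (dist_self hb y)
  · exact Or.inr (dist_eq_simple_symm hb h)

theorem mem_residue_singleton_trans {i : B} {x y z : C} (hy : y ∈ residue cs δ {i} x)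
    (hz : z ∈ residue cs δ {i} y) : z ∈ residue cs δ {i} x := by
  rw [mem_residue_singleton_iff] at hy hz ⊢
  rcases hy with hy | hy
  · rwa [(hb.eq_one_iff x y).mp hy]
  rcases hz with hz | hz
  · rw [← (hb.eq_one_iff y z).mp hz]; exact Or.inr hy
  rcases hb.step x y z i hz with h | h <;> rw [h, hy]
  · exact Or.inr rfl
  · exact Or.inl (cs.simple_mul_simple_self i)

theorem isGate_residue_singleton {i : B} {x₀ x z : C} (hz : z ∈ residue cs δ {i} x₀)
    (hlen : cs.length (δ x z * cs.simple i) = cs.length (δ x z) + 1) :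
    IsGate cs δ (residue cs δ {i} x₀) x z := by
  refine ⟨hz, fun y hy => ?_⟩
  rcases (mem_residue_singleton_iff cs δ).mp
      (mem_residue_singleton_trans hb (mem_residue_singleton_comm hb hz) hy) with h | h
  · rw [← (hb.eq_one_iff z y).mp h, dist_self hb, cs.length_one, add_zero]
  · rw [hb.step_of_length x z y i h hlen, hlen, h, cs.length_simple]

theorem proj_eq_of_isGate {R : Set C} {x g : C} (hg : IsGate cs δ R x g) : proj cs δ R x = g := by
  have hex : ∃ g, IsGate cs δ R x g := ⟨g, hg⟩
  rw [proj, dif_pos hex]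
  have h1 := hex.choose_spec.2 g hg.1
  have h2 := hg.2 _ hex.choose_spec.1
  exact (hb.eq_one_iff _ _).mp (cs.length_eq_zero_iff.mp (by omega))

theorem dist_eq_mul_of_length_add {x a b : C} {u : W} (hab : δ a b = u)
    (hlen : cs.length (δ x a * u) = cs.length (δ x a) + cs.length u) : δ x b = δ x a * u := by
  induction hn : cs.length u using Nat.strong_induction_on generalizing b u with
  | _ n ih =>
  obtain rfl | hne := eq_or_ne u 1
  · rw [mul_one, (hb.eq_one_iff a b).mp hab]
  obtain ⟨i, hi⟩ := exists_length_mul_simple_add_one_eq cs hne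
  obtain ⟨z, hbz, haz⟩ := hb.exists_step a b i
  have hlen' : cs.length (δ x a * (u * cs.simple i)) =
      cs.length (δ x a) + cs.length (u * cs.simple i) := by
    have h1 := cs.length_mul_le (δ x a) (u * cs.simple i)
    have h2 := cs.length_mul_simple (δ x a * u) i
    rw [mul_assoc] at h2
    omega
  have hxz := ih _ (by omega) (haz.trans (by rw [hab])) hlen' rfl
  have hstep : cs.length (δ x z * cs.simple i) = cs.length (δ x z) + 1 := by
    rw [hxz, mul_assoc, cs.simple_mul_simple_cancel_right, hlen, hlen']
    omega
  rw [hb.step_of_length x z b i (dist_eq_simple_symm hb hbz) hstep, hxz, mul_assoc,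
    cs.simple_mul_simple_cancel_right]

theorem dist_symm (x y : C) : δ y x = (δ x y)⁻¹ := by
  induction hn : cs.length (δ x y) using Nat.strong_induction_on generalizing y with
  | _ n ih =>
  obtain hxy | hne := eq_or_ne (δ x y) 1
  · rw [hxy, (hb.eq_one_iff x y).mp hxy, dist_self hb, inv_one]
  obtain ⟨i, hi⟩ := exists_length_mul_simple_add_one_eq cs hne
  obtain ⟨z, hyz, hxz⟩ := hb.exists_step x y i
  have hzx := ih _ (by rw [hxz]; omega) z rfl
  rw [dist_eq_mul_of_length_add hb hzx, hyz, hxz, mul_inv_rev, cs.inv_simple,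
    cs.simple_mul_simple_cancel_left]
  rw [hyz, hxz, cs.length_inv, mul_inv_rev, cs.inv_simple, cs.simple_mul_simple_cancel_left,
    cs.length_inv, cs.length_simple]
  omega

theorem length_inv_dist_mul_dist_le (x a b : C) :
    cs.length ((δ x a)⁻¹ * δ x b) ≤ cs.length (δ a b) := by
  induction hn : cs.length (δ a b) using Nat.strong_induction_on generalizing b with
  | _ n ih =>
  obtain hab | hne := eq_or_ne (δ a b) 1
  · rw [← (hb.eq_one_iff a b).mp hab, inv_mul_cancel, cs.length_one]
    exact Nat.zero_le n
  obtain ⟨i, hi⟩ := exists_length_mul_simple_add_one_eq cs hne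
  obtain ⟨z, hbz, haz⟩ := hb.exists_step a b i
  have hz := ih _ (by rw [haz]; omega) z rfl
  rw [haz] at hz
  have hstep := cs.length_mul_le ((δ x a)⁻¹ * δ x z) (cs.simple i)
  rw [cs.length_simple] at hstep
  rcases hb.step x z b i (dist_eq_simple_symm hb hbz) with h | h <;> rw [h] <;>
    [omega; (rw [← mul_assoc]; omega)]

theorem length_dist_le_add (x y z : C) :
    cs.length (δ x z) ≤ cs.length (δ x y) + cs.length (δ y z) := by
  calc cs.length (δ x z) = cs.length (δ x y * ((δ x y)⁻¹ * δ x z)) := by rw [mul_inv_cancel_left]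
    _ ≤ cs.length (δ x y) + cs.length ((δ x y)⁻¹ * δ x z) := cs.length_mul_le _ _
    _ ≤ cs.length (δ x y) + cs.length (δ y z) := by
      gcongr; exact length_inv_dist_mul_dist_le hb x y z

section Apartment

variable {A : Set C} (hA : IsApartment cs δ A)
include hA

theorem exists_dist_eq_simple_of_mem_apartment {x : C} (hx : x ∈ A) (i : B) :
    ∃ y ∈ A, δ x y = cs.simple i := by
  have hP := hA.2.2 _ ⟨i, x, rfl⟩ ⟨x, mem_residue_singleton_self hb i x, hx⟩
  obtain ⟨y, ⟨hyP, hyA⟩, hyx⟩ :=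
    Set.exists_ne_of_one_lt_ncard (s := residue cs δ {i} x ∩ A) (by omega) x
  refine ⟨y, hyA, ((mem_residue_singleton_iff cs δ).mp hyP).resolve_left fun h => hyx ?_⟩
  exact ((hb.eq_one_iff x y).mp h).symm

theorem eq_of_dist_eq_simple_of_mem_apartment {x y y' : C} {i : B} (hx : x ∈ A) (hy : y ∈ A)
    (hy' : y' ∈ A) (h : δ x y = cs.simple i) (h' : δ x y' = cs.simple i) : y = y' := by
  by_contra hne
  have hP := hA.2.2 _ ⟨i, x, rfl⟩ ⟨x, mem_residue_singleton_self hb i x, hx⟩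
  have hsub : ({x, y, y'} : Set C) ⊆ residue cs δ {i} x ∩ A := by
    rintro z (rfl | rfl | rfl)
    · exact ⟨mem_residue_singleton_self hb i z, hx⟩
    · exact ⟨(mem_residue_singleton_iff cs δ).mpr (Or.inr h), hy⟩
    · exact ⟨(mem_residue_singleton_iff cs δ).mpr (Or.inr h'), hy'⟩
  have hne' (z : C) (hz : δ x z = cs.simple i) : x ≠ z := by
    rintro rfl; exact simple_ne_one cs i (hz ▸ dist_self hb x)
  have h3 := Set.ncard_le_ncard hsub (Set.finite_of_ncard_pos (by omega))
  rw [Set.ncard_eq_three.mpr ⟨x, y, y', hne' y h, hne' y' h', hne, rfl⟩] at h3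
  omega

theorem exists_mem_apartment_dist_eq_dist_mul_simple {x y : C} (hx : x ∈ A) (hy : y ∈ A) {i : B}
    (hi : cs.length (δ x y * cs.simple i) + 1 = cs.length (δ x y)) :
    ∃ z ∈ A, δ z y = cs.simple i ∧ δ x z = δ x y * cs.simple i := by
  obtain ⟨z, hyz, hxz⟩ := hb.exists_step x y i
  have hgate : IsGate cs δ (residue cs δ {i} y) x z := by
    refine isGate_residue_singleton hb ((mem_residue_singleton_iff cs δ).mpr (Or.inr hyz)) ?_
    rw [hxz, cs.simple_mul_simple_cancel_right]
    omega
  refine ⟨z, ?_, dist_eq_simple_symm hb hyz, hxz⟩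
  rw [← proj_eq_of_isGate hb hgate]
  exact hA.2.1 _ ⟨i, y, rfl⟩ ⟨y, mem_residue_singleton_self hb i y, hy⟩ x hx

theorem eq_of_dist_eq_of_mem_apartment {x y y' : C} (hx : x ∈ A) (hy : y ∈ A) (hy' : y' ∈ A)
    (h : δ x y = δ x y') : y = y' := by
  induction hn : cs.length (δ x y) using Nat.strong_induction_on generalizing y y' with
  | _ n ih =>
  obtain h1 | hne := eq_or_ne (δ x y) 1
  · rw [← (hb.eq_one_iff x y).mp h1, (hb.eq_one_iff x y').mp (h ▸ h1)]
  obtain ⟨i, hi⟩ := exists_length_mul_simple_add_one_eq cs hne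
  obtain ⟨z, hzA, hzy, hxz⟩ := exists_mem_apartment_dist_eq_dist_mul_simple hb hA hx hy hi
  obtain ⟨z', hzA', hzy', hxz'⟩ :=
    exists_mem_apartment_dist_eq_dist_mul_simple hb hA hx hy' (h ▸ hi)
  have hzz : z = z' := ih _ (by rw [hxz]; omega) hzA hzA' (by rw [hxz, hxz', h]) rfl
  exact eq_of_dist_eq_simple_of_mem_apartment hb hA hzA hy hy' hzy (hzz ▸ hzy')

theorem dist_mul_simple_of_mem_apartment {x z z' : C} {i : B} (hx : x ∈ A) (hz : z ∈ A)
    (hz' : z' ∈ A) (h : δ z z' = cs.simple i) : δ x z' = δ x z * cs.simple i := by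
  refine (hb.step x z z' i h).resolve_left fun h' => simple_ne_one cs i ?_
  rw [← h, eq_of_dist_eq_of_mem_apartment hb hA hx hz' hz h', dist_self hb]

theorem exists_dist_eq_of_mem_apartment {x : C} (hx : x ∈ A) (w : W) : ∃ z ∈ A, δ x z = w := by
  induction w using cs.simple_induction_right with
  | one => exact ⟨x, hx, dist_self hb x⟩
  | mul_simple_right w i ih =>
    obtain ⟨z, hz, rfl⟩ := ih
    obtain ⟨z', hz', hzz'⟩ := exists_dist_eq_simple_of_mem_apartment hb hA hz i
    exact ⟨z', hz', dist_mul_simple_of_mem_apartment hb hA hx hz hz' hzz'⟩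

theorem dist_mul_of_mem_apartment {x y z : C} (hx : x ∈ A) (hy : y ∈ A) (hz : z ∈ A) :
    δ x z = δ x y * δ y z := by
  suffices ∀ w, ∀ z ∈ A, δ y z = w → δ x z = δ x y * w from this _ z hz rfl
  intro w
  induction w using cs.simple_induction_right with
  | one => intro z _ h; rw [mul_one, ← (hb.eq_one_iff y z).mp h]
  | mul_simple_right w i ih =>
    intro z hz hyz
    obtain ⟨z', hz', hyz'⟩ := exists_dist_eq_of_mem_apartment hb hA hy w
    obtain ⟨z'', hz'', hz'z''⟩ := exists_dist_eq_simple_of_mem_apartment hb hA hz' i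
    obtain rfl : z'' = z := eq_of_dist_eq_of_mem_apartment hb hA hy hz'' hz
      (by rw [dist_mul_simple_of_mem_apartment hb hA hy hz' hz'' hz'z'', hyz', hyz])
    rw [dist_mul_simple_of_mem_apartment hb hA hx hz' hz'' hz'z'', ih z' hz' hyz', mul_assoc]

end Apartment

theorem isPartialIsometry_insert {S : Set (W × C)} (hS : IsPartialIsometry δ S) {w : W} {y : C}
    (hy : ∀ p ∈ S, δ p.2 y = p.1⁻¹ * w) : IsPartialIsometry δ (insert (w, y) S) := by
  rintro p (rfl | hp) q (rfl | hq)
  · rw [dist_self hb, inv_mul_cancel]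
  · rw [dist_symm hb, hy q hq, mul_inv_rev, inv_inv]
  · exact hy p hp
  · exact hS p hp q hq

theorem exists_isPartialIsometry_insert {S : Set (W × C)} (hS : IsPartialIsometry δ S) {v : W}
    {x : C} (hvx : (v, x) ∈ S) (j : B) :
    ∃ y, IsPartialIsometry δ (insert (v * cs.simple j, y) S) := by
  have hx (p : W × C) (hp : p ∈ S) : δ p.2 x = p.1⁻¹ * v := hS p hp _ hvx
  -- If some `p ∈ S` sees `v * s j` closer than `v`, the new chamber must be the `j`-neighbour of
  -- `x` on the way to `p.2`; otherwise any `j`-neighbour of `x` will do.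
  by_cases hdesc : ∃ p ∈ S, cs.length (p.1⁻¹ * v * cs.simple j) < cs.length (p.1⁻¹ * v)
  · obtain ⟨p₀, hp₀, hdesc₀⟩ := hdesc
    obtain ⟨y, hxy, hp₀y⟩ := hb.exists_step p₀.2 x j
    refine ⟨y, isPartialIsometry_insert hb hS fun p hp => ?_⟩
    rcases hb.step p.2 x y j hxy with h | h
    · have hlip := length_inv_dist_mul_dist_le hb p.2 p₀.2 y
      rw [h, hx p hp, hS p hp p₀ hp₀, hp₀y, hx p₀ hp₀, mul_inv_rev, inv_inv, mul_assoc,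
        mul_inv_cancel_left] at hlip
      omega
    · rw [h, hx p hp, mul_assoc]
  · simp only [not_exists, not_and] at hdesc
    obtain ⟨y, hxy, -⟩ := hb.exists_step x x j
    refine ⟨y, isPartialIsometry_insert hb hS fun p hp => ?_⟩
    have hasc := cs.length_mul_simple (p.1⁻¹ * v) j
    have := hdesc p hp
    rw [← mul_assoc, ← hx p hp]
    exact hb.step_of_length _ _ _ j hxy (by rw [hx p hp]; omega)

theorem exists_isometry_extending {S : Set (W × C)} (hS : IsPartialIsometry δ S)
    (hne : S.Nonempty) :
    ∃ F : W → C, (∀ u v, δ (F u) (F v) = u⁻¹ * v) ∧ ∀ p ∈ S, F p.1 = p.2 := by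
  obtain ⟨T, hST, hmax⟩ := zorn_subset_nonempty {T | IsPartialIsometry δ T}
    (fun c hc hchain _ => ⟨⋃₀ c, fun p ⟨s, hs, hp⟩ q ⟨s', hs', hq⟩ => by
      rcases hchain.total hs hs' with h | h
      exacts [hc hs' p (h hp) q hq, hc hs p hp q (h hq)], fun s => Set.subset_sUnion_of_mem⟩)
    S hS
  obtain ⟨p₀, hp₀⟩ := hne
  have htotal (w : W) : ∃ x, (p₀.1 * w, x) ∈ T := by
    induction w using cs.simple_induction_right with
    | one => exact ⟨p₀.2, by rw [mul_one]; exact hST hp₀⟩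
    | mul_simple_right w j ih =>
      obtain ⟨x, hx⟩ := ih
      obtain ⟨y, hy⟩ := exists_isPartialIsometry_insert hb hmax.1 hx j
      exact ⟨y, by rw [← mul_assoc]; exact hmax.2 hy (Set.subset_insert _ _) (Set.mem_insert _ _)⟩
  choose F hF using fun w => htotal (p₀.1⁻¹ * w)
  simp only [mul_inv_cancel_left] at hF
  refine ⟨F, fun u v => hmax.1 _ (hF u) _ (hF v), fun p hp => ?_⟩
  have h := hmax.1 _ (hF p.1) _ (hST hp)
  rw [inv_mul_cancel] at h
  exact (hb.eq_one_iff _ _).mp h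

section Isometry

variable {F : W → C} (hF : ∀ u v, δ (F u) (F v) = u⁻¹ * v)
include hF

theorem residue_singleton_inter_range {j : B} {x₀ : C} {v : W}
    (hv : F v ∈ residue cs δ {j} x₀) :
    residue cs δ {j} x₀ ∩ Set.range F = {F v, F (v * cs.simple j)} := by
  have hadj : δ (F v) (F (v * cs.simple j)) = cs.simple j := by rw [hF, inv_mul_cancel_left]
  ext z
  constructor
  · rintro ⟨hz, u, rfl⟩
    rcases (mem_residue_singleton_iff cs δ).mp
        (mem_residue_singleton_trans hb (mem_residue_singleton_comm hb hv) hz) with h | h <;>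
      rw [hF] at h
    · exact Or.inl (by rw [inv_mul_eq_one.mp h])
    · exact Or.inr (by rw [← h, mul_inv_cancel_left]; rfl)
  · rintro (rfl | rfl)
    · exact ⟨hv, v, rfl⟩
    · exact ⟨mem_residue_singleton_trans hb hv ((mem_residue_singleton_iff cs δ).mpr (Or.inr hadj)),
        _, rfl⟩

theorem isApartment_range : IsApartment cs δ (Set.range F) := by
  refine ⟨Set.range_nonempty F, ?_, ?_⟩
  · rintro _ ⟨j, x₀, rfl⟩ ⟨_, hvP, v, rfl⟩ _ ⟨u, rfl⟩
    have hvP' : F (v * cs.simple j) ∈ residue cs δ {j} x₀ :=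
      ((residue_singleton_inter_range hb hF hvP).symm ▸ Or.inr rfl :
        F (v * cs.simple j) ∈ residue cs δ {j} x₀ ∩ Set.range F).1
    rcases cs.length_mul_simple (u⁻¹ * v) j with h | h
    · rw [proj_eq_of_isGate hb (isGate_residue_singleton hb hvP (by rwa [hF]))]
      exact ⟨v, rfl⟩
    · rw [proj_eq_of_isGate hb (isGate_residue_singleton hb hvP' (by
        rw [hF, ← mul_assoc, cs.simple_mul_simple_cancel_right]; omega))]
      exact ⟨_, rfl⟩
  · rintro _ ⟨j, x₀, rfl⟩ ⟨_, hvP, v, rfl⟩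
    rw [residue_singleton_inter_range hb hF hvP]
    refine Set.ncard_pair fun h => simple_ne_one cs j ?_
    rw [← inv_mul_cancel_left v (cs.simple j), ← hF, ← h, dist_self hb]

end Isometry

theorem exists_apartment_insert {A T : Set C} (hA : IsApartment cs δ A) (hTA : T ⊆ A) {x₀ y : C}
    (hx₀ : x₀ ∈ T) {w : W} (hy : ∀ x ∈ T, δ x y = δ x x₀ * w) :
    ∃ A', IsApartment cs δ A' ∧ T ⊆ A' ∧ y ∈ A' := by
  have hT : IsPartialIsometry δ ((fun x => (δ x₀ x, x)) '' T) := by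
    rintro _ ⟨x, hx, rfl⟩ _ ⟨x', hx', rfl⟩
    rw [dist_mul_of_mem_apartment hb hA (hTA hx) (hTA hx₀) (hTA hx'), dist_symm hb x₀ x]
  have hS := isPartialIsometry_insert hb hT (w := w) (y := y) (by
    rintro _ ⟨x, hx, rfl⟩
    rw [hy x hx, dist_symm hb x₀ x])
  obtain ⟨F, hF, hFS⟩ := exists_isometry_extending hb hS (Set.insert_nonempty _ _)
  refine ⟨Set.range F, isApartment_range hb hF, ?_, ⟨w, hFS _ (Set.mem_insert _ _)⟩⟩
  rintro x hx
  exact ⟨δ x₀ x, hFS _ (Set.mem_insert_of_mem _ ⟨x, hx, rfl⟩)⟩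

theorem length_dist_le_of_gallery {d : ℕ → C} {k : ℕ}
    (hgal : ∀ i < k, ∃ s : B, δ (d i) (d (i + 1)) = cs.simple s) {i j : ℕ} (hij : i ≤ j)
    (hjk : j ≤ k) : cs.length (δ (d i) (d j)) ≤ j - i := by
  induction j, hij using Nat.le_induction with
  | base => rw [dist_self hb, cs.length_one]; exact Nat.zero_le _
  | succ j hij ih =>
    obtain ⟨s, hs⟩ := hgal j (by omega)
    have := cs.length_mul_le (δ (d i) (d j)) (cs.simple s)
    rw [cs.length_simple] at this
    rcases hb.step (d i) (d j) (d (j + 1)) s hs with h | h <;> rw [h] <;> omega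

theorem dist_eq_dist_mul_simple_of_minimal_gallery {d : ℕ → C} {n : ℕ}
    (hgal : ∀ i < n + 1, ∃ s : B, δ (d i) (d (i + 1)) = cs.simple s)
    (hmin : cs.length (δ (d 0) (d (n + 1))) = n + 1) {t : B}
    (ht : δ (d n) (d (n + 1)) = cs.simple t) {i : ℕ} (hi : i ≤ n) :
    δ (d i) (d (n + 1)) = δ (d i) (d n) * cs.simple t := by
  refine (hb.step (d i) (d n) (d (n + 1)) t ht).resolve_left fun h => ?_
  have h0i := length_dist_le_of_gallery hb hgal (Nat.zero_le i) (by omega)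
  have hin := length_dist_le_of_gallery hb hgal hi (by omega)
  have := length_dist_le_add hb (d 0) (d i) (d (n + 1))
  rw [h] at this
  omega

theorem length_dist_mul_simple_of_mem_root {A α : Set C} (hA : IsApartment cs δ A)
    (hα : IsRootOf cs δ A α) {x e c : C} {t : B} (hx : x ∈ α) (he : e ∈ A) (heα : e ∉ α)
    (hxe : δ x e = cs.simple t) (hc : c ∈ α) :
    cs.length (δ c x * cs.simple t) = cs.length (δ c x) + 1 := by
  obtain ⟨hαA, i, f, hf, hδf⟩ := hα
  have hx₀ : f x ∈ halfspace cs i := hf.mapsTo hx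
  have hxt : f x * cs.simple t ∉ halfspace cs i := by
    rintro hmem
    obtain ⟨y, hy, hfy⟩ := hf.surjOn hmem
    refine heα (eq_of_dist_eq_of_mem_apartment hb hA (hαA hx) (hαA hy) he ?_ ▸ hy)
    rw [hxe, hδf x hx y hy, hfy, inv_mul_cancel_left]
  rw [mem_halfspace] at hx₀ hxt
  have h1 := cs.length_simple_mul (f x) i
  have h2 := cs.length_mul_simple (f x) t
  have h3 := cs.length_simple_mul (f x * cs.simple t) i
  have h4 := cs.length_mul_simple (cs.simple i * f x) t
  rw [← mul_assoc] at hxt h3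
  have hwall := simple_mul_eq_mul_simple_of_length cs (u := f x) (i := i) (j := t)
    (by omega) (by omega) (by omega)
  rw [hδf c hc x hx]
  exact length_inv_mul_mul_simple_of_mem_halfspace cs (hf.mapsTo hx) hwall (hf.mapsTo hc)

end Building

/-- Let `(d 0, …, d k)` be a minimal gallery and `c` a chamber. If the apartment
`A` contains `c, d 0, …, d (k-1)` but no apartment contains `c, d 0, …, d k`, and `α` is a
root of `A` containing `d (k-1)` but not the chamber `e ∈ A` with
`δ (d (k-1)) e = δ (d (k-1)) (d k)`, then `c ∉ α`. -/
theorem statement5 (hb : IsBuilding cs δ) (k : ℕ) (hk : 1 ≤ k) (d : ℕ → C) (c : C)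
    (hgal : ∀ i < k, ∃ s : B, δ (d i) (d (i+1)) = cs.simple s)
    (hmin : cs.length (δ (d 0) (d k)) = k)
    (A : Set C) (hA : IsApartment cs δ A) (hcA : c ∈ A)
    (hdA : ∀ i < k, d i ∈ A)
    (hno : ¬ ∃ A' : Set C, IsApartment cs δ A' ∧ c ∈ A' ∧ ∀ i ≤ k, d i ∈ A')
    (e : C) (heA : e ∈ A) (he : δ (d (k-1)) e = δ (d (k-1)) (d k))
    (α : Set C) (hα : IsRootOf cs δ A α) (hdα : d (k-1) ∈ α) (heα : e ∉ α) :
    c ∉ α := by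
  intro hc
  obtain ⟨n, rfl⟩ : ∃ n, k = n + 1 := ⟨k - 1, by omega⟩
  rw [Nat.add_sub_cancel] at he hdα
  obtain ⟨t, ht⟩ := hgal n n.lt_succ_self
  have hcd : δ c (d (n + 1)) = δ c (d n) * cs.simple t := hb.step_of_length _ _ _ t ht
    (length_dist_mul_simple_of_mem_root hb hA hα hdα heA heα (he.trans ht) hc)
  obtain ⟨A', hA', hsub, hdA'⟩ := exists_apartment_insert hb hA
    (T := insert c (d '' Set.Iio (n + 1))) (x₀ := d n) (w := cs.simple t)
    (by rintro _ (rfl | ⟨i, hi, rfl⟩); exacts [hcA, hdA i hi])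
    (Or.inr ⟨n, n.lt_succ_self, rfl⟩)
    (by
      rintro _ (rfl | ⟨i, hi, rfl⟩)
      exacts [hcd,
        dist_eq_dist_mul_simple_of_minimal_gallery hb hgal hmin ht (Nat.lt_succ_iff.mp hi)])
  refine hno ⟨A', hA', hsub (Or.inl rfl), fun i hi => ?_⟩
  obtain hi | rfl := Nat.lt_or_eq_of_le hi
  exacts [hsub (Or.inr ⟨i, hi, rfl⟩), hdA']

end BldgPaper
end
end
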